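/- (Accelerated descent lemma.) Let F = f + g with f convex, L-Lipschitz gradient, g proper convex lsc, and let x⋆ minimize F with F⋆ = F(x⋆). Let γ > 0, let (t_k) satisfy t_k² − t_k ≤ t_{k−1}², and let x_k, y_k be arbitrary with x_{k+1} = T_γ(y_k). Setting v_k = F(x_{k+1}) − F⋆, one has: t_k² v_k − t_{k−1}² v_{k−1} ≤ −((1−γL)/(2γ))‖t_k x_{k+1} − t_k y_k‖² − (1/(2γ))‖t_k x_{k+1} − (t_k−1)x_k − x⋆‖² + (1/(2γ))‖t_k y_k − (t_k−1)x_k − x⋆‖². -/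

import Mathlib

open scoped RealInnerProductSpace Topology
noncomputable section
variable {E : Type*} [NormedAddCommGroup E] [InnerProductSpace ℝ E] [CompleteSpace E]

lemma line_hasDerivAt (f : E → ℝ) (f' : E → E) (hf' : ∀ z, HasGradientAt f (f' z) z)
    (y d : E) (s : ℝ) :
    HasDerivAt (fun s : ℝ => f (y + s • d)) ⟪f' (y + s • d), d⟫ s := by
  have hline : HasDerivAt (fun s : ℝ => y + s • d) d s := by
    simpa using ((hasDerivAt_id s).smul_const d).const_add y
  have := (hf' (y + s • d)).hasFDerivAt.comp_hasDerivAt s hline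
  simpa [InnerProductSpace.toDual_apply_apply, Function.comp_def] using this

lemma convex_grad_ineq (f : E → ℝ) (f' : E → E) (hcvx : ConvexOn ℝ Set.univ f)
    (hf' : ∀ z, HasGradientAt f (f' z) z) (y u : E) :
    f y + ⟪f' y, u - y⟫ ≤ f u := by
  set d := u - y with hd
  have hder : HasDerivAt (fun s : ℝ => f (y + s • d)) ⟪f' y, d⟫ 0 := by
    simpa using line_hasDerivAt f f' hf' y d 0
  have hslope : Filter.Tendsto (slope (fun s : ℝ => f (y + s • d)) 0) (𝓝[>] 0)
      (𝓝 ⟪f' y, d⟫) :=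
    (hasDerivAt_iff_tendsto_slope.1 hder).mono_left
      (nhdsWithin_mono 0 (by intro x hx; exact ne_of_gt hx))
  have hbound : ∀ᶠ s in 𝓝[>] (0:ℝ), slope (fun s : ℝ => f (y + s • d)) 0 s ≤ f u - f y := by
    filter_upwards [Ioo_mem_nhdsGT_of_mem (by norm_num : (0:ℝ) ∈ Set.Ico 0 1)] with s hs
    obtain ⟨hs0, hs1⟩ := hs
    have hcc : f (y + s • d) ≤ (1 - s) * f y + s * f u := by
      have := hcvx.2 (Set.mem_univ y) (Set.mem_univ u) (by linarith : (0:ℝ) ≤ 1 - s)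
        (le_of_lt hs0) (by ring)
      have heq : (1 - s) • y + s • u = y + s • d := by
        simp [hd, smul_sub, sub_smul]; module
      rw [heq] at this
      simpa using this
    rw [slope_def_field, sub_zero, div_le_iff₀ hs0]
    simp only [zero_smul, add_zero]
    nlinarith
  have := le_of_tendsto hslope hbound
  simpa [hd] using by linarith [this]

lemma smooth_descent (f : E → ℝ) (f' : E → E) (hf' : ∀ z, HasGradientAt f (f' z) z)
    (L : NNReal) (hL : LipschitzWith L f') (y x : E) :
    f x ≤ f y + ⟪f' y, x - y⟫ + L / 2 * ‖x - y‖ ^ 2 := by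
  set d := x - y with hd
  set φ : ℝ → ℝ := fun s => f (y + s • d) with hφ
  set ψ : ℝ → ℝ := fun s => ⟪f' (y + s • d), d⟫ with hψ
  have hder : ∀ s ∈ Set.uIcc (0:ℝ) 1, HasDerivAt φ (ψ s) s := fun s _ =>
    line_hasDerivAt f f' hf' y d s
  have hcont : Continuous ψ := by
    apply Continuous.inner
    · exact hL.continuous.comp (by continuity)
    · exact continuous_const
  have hint : IntervalIntegrable ψ MeasureTheory.volume 0 1 :=
    hcont.intervalIntegrable 0 1
  have hFTC : ∫ s in (0:ℝ)..1, ψ s = φ 1 - φ 0 :=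
    intervalIntegral.integral_eq_sub_of_hasDerivAt hder hint
  have hψle : ∀ s ∈ Set.Icc (0:ℝ) 1, ψ s ≤ ⟪f' y, d⟫ + s * (L * ‖d‖ ^ 2) := by
    intro s hs
    have h1 : ⟪f' (y + s • d) - f' y, d⟫ ≤ ‖f' (y + s • d) - f' y‖ * ‖d‖ :=
      real_inner_le_norm _ _
    have h2 : ‖f' (y + s • d) - f' y‖ ≤ L * (s * ‖d‖) := by
      have := hL.dist_le_mul (y + s • d) y
      rw [dist_eq_norm] at this
      simpa [norm_smul, abs_of_nonneg hs.1, dist_eq_norm, mul_assoc] using this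
    have h3 : ⟪f' (y + s • d) - f' y, d⟫ ≤ L * (s * ‖d‖) * ‖d‖ :=
      h1.trans (mul_le_mul_of_nonneg_right h2 (norm_nonneg d))
    have h4 : ψ s = ⟪f' y, d⟫ + ⟪f' (y + s • d) - f' y, d⟫ := by
      simp [hψ, inner_sub_left]
    rw [h4]; nlinarith [norm_nonneg d]
  have hmono : ∫ s in (0:ℝ)..1, ψ s ≤ ∫ s in (0:ℝ)..1, (⟪f' y, d⟫ + s * (L * ‖d‖ ^ 2)) := by
    apply intervalIntegral.integral_mono_on (by norm_num) hint
    · exact ((continuous_const.add (continuous_id.mul continuous_const)).intervalIntegrable 0 1)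
    · exact hψle
  have hval : ∫ s in (0:ℝ)..1, (⟪f' y, d⟫ + s * (L * ‖d‖ ^ 2))
      = ⟪f' y, d⟫ + L * ‖d‖ ^ 2 / 2 := by
    have hint2 : IntervalIntegrable (fun s : ℝ => s * ((L:ℝ) * ‖d‖ ^ 2))
        MeasureTheory.volume 0 1 := by
      apply Continuous.intervalIntegrable; continuity
    rw [intervalIntegral.integral_add intervalIntegrable_const hint2]
    rw [intervalIntegral.integral_mul_const, integral_id]
    simp; ring
  have hφ0 : φ 0 = f y := by simp [hφ]
  have hφ1 : φ 1 = f x := by simp [hφ, hd]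
  rw [hφ0, hφ1] at hFTC
  rw [hval] at hmono
  rw [hFTC] at hmono
  have : (L:ℝ) / 2 * ‖d‖ ^ 2 = L * ‖d‖ ^ 2 / 2 := by ring
  linarith [hmono]

lemma prox_ineq (g : E → ℝ) (hg : ConvexOn ℝ Set.univ g) (γ : ℝ) (hγ : 0 < γ) (c p : E)
    (hmin : IsMinOn (fun w => g w + ‖w - c‖ ^ 2 / (2 * γ)) Set.univ p) (u : E) :
    g p ≤ g u + ⟪p - c, u - p⟫ / γ := by
  have key : ∀ s ∈ Set.Ioo (0:ℝ) 1,
      g p ≤ g u + ⟪p - c, u - p⟫ / γ + s * ‖u - p‖ ^ 2 / (2 * γ) := by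
    intro s hs
    obtain ⟨hs0, hs1⟩ := hs
    have hm : g p + ‖p - c‖ ^ 2 / (2 * γ)
        ≤ g (p + s • (u - p)) + ‖p + s • (u - p) - c‖ ^ 2 / (2 * γ) :=
      hmin (Set.mem_univ (p + s • (u - p)))
    have hnorm : ‖p + s • (u - p) - c‖ ^ 2
        = ‖p - c‖ ^ 2 + 2 * s * ⟪p - c, u - p⟫ + s ^ 2 * ‖u - p‖ ^ 2 := by
      have : p + s • (u - p) - c = (p - c) + s • (u - p) := by abel
      rw [this, norm_add_sq_real, real_inner_smul_right, norm_smul]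
      simp [abs_of_nonneg hs0.le]
      ring
    have hcc : g (p + s • (u - p)) ≤ (1 - s) * g p + s * g u := by
      have h := hg.2 (Set.mem_univ p) (Set.mem_univ u) (by linarith : (0:ℝ) ≤ 1 - s)
        hs0.le (by ring)
      have heq : (1 - s) • p + s • u = p + s • (u - p) := by
        simp [smul_sub, sub_smul]; module
      rw [heq] at h
      simpa using h
    rw [hnorm, add_div, add_div] at hm
    have hsum : s * g p ≤ s * g u
        + (2 * s * ⟪p - c, u - p⟫ / (2 * γ) + s ^ 2 * ‖u - p‖ ^ 2 / (2 * γ)) := by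
      linarith [hm, hcc]
    have e : s * g u + (2 * s * ⟪p - c, u - p⟫ / (2 * γ) + s ^ 2 * ‖u - p‖ ^ 2 / (2 * γ))
        = s * (g u + ⟪p - c, u - p⟫ / γ + s * ‖u - p‖ ^ 2 / (2 * γ)) := by
      field_simp; ring
    rw [e] at hsum
    exact le_of_mul_le_mul_left hsum hs0
  have htend : Filter.Tendsto (fun s : ℝ => g u + ⟪p - c, u - p⟫ / γ + s * ‖u - p‖ ^ 2 / (2 * γ))
      (𝓝[>] 0) (𝓝 (g u + ⟪p - c, u - p⟫ / γ)) := by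
    have : Filter.Tendsto (fun s : ℝ => g u + ⟪p - c, u - p⟫ / γ + s * ‖u - p‖ ^ 2 / (2 * γ))
        (𝓝 0) (𝓝 (g u + ⟪p - c, u - p⟫ / γ + 0 * ‖u - p‖ ^ 2 / (2 * γ))) := by
      exact (Continuous.tendsto (by continuity) 0)
    simpa using this.mono_left nhdsWithin_le_nhds
  refine ge_of_tendsto htend ?_
  filter_upwards [Ioo_mem_nhdsGT_of_mem (by norm_num : (0:ℝ) ∈ Set.Ico 0 1)] with s hs
  exact key s hs

lemma polar_id (a b c : E) :
    ⟪a - b, c - a⟫ = (‖b - c‖ ^ 2 - ‖a - b‖ ^ 2 - ‖a - c‖ ^ 2) / 2 := by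
  have h1 : b - c = (b - a) + (a - c) := by abel
  rw [h1, norm_add_sq_real]
  have h2 : ⟪b - a, a - c⟫ = ⟪a - b, c - a⟫ := by
    rw [← neg_sub a b, ← neg_sub c a, inner_neg_neg]
  rw [h2, norm_sub_rev b a]
  ring

lemma key_id (t : ℝ) (a b c d : E) :
    t * ((t - 1) * (‖a - c‖ ^ 2 - ‖b - c‖ ^ 2) + (‖a - d‖ ^ 2 - ‖b - d‖ ^ 2))
      = ‖t • a - (t - 1) • c - d‖ ^ 2 - ‖t • b - (t - 1) • c - d‖ ^ 2 := by
  simp only [← real_inner_self_eq_norm_sq, inner_sub_left, inner_sub_right,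
    real_inner_smul_left, real_inner_smul_right]
  rw [real_inner_comm c a, real_inner_comm d a, real_inner_comm c b,
    real_inner_comm d b, real_inner_comm d c]
  ring

set_option maxHeartbeats 2000000 in
/-- Accelerated descent lemma. -/
theorem accelerated_descent_lemma {n : ℕ}
    (f : EuclideanSpace ℝ (Fin n) → ℝ) (f' : EuclideanSpace ℝ (Fin n) → EuclideanSpace ℝ (Fin n))
    (hf_cvx : ConvexOn ℝ Set.univ f)
    (hf' : ∀ z, HasGradientAt f (f' z) z)
    (L : NNReal) (hL : LipschitzWith L f')
    (g : EuclideanSpace ℝ (Fin n) → ℝ)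
    (hg_cvx : ConvexOn ℝ Set.univ g) (hg_lsc : LowerSemicontinuous g)
    (γ : ℝ) (hγ : 0 < γ)
    (T : EuclideanSpace ℝ (Fin n) → EuclideanSpace ℝ (Fin n))
    (hT : ∀ z, IsMinOn (fun w => g w + ‖w - (z - γ • f' z)‖ ^ 2 / (2 * γ)) Set.univ (T z))
    (F : EuclideanSpace ℝ (Fin n) → ℝ) (hF : ∀ z, F z = f z + g z)
    (xstar : EuclideanSpace ℝ (Fin n)) (hxstar : IsMinOn F Set.univ xstar)
    (tk tkm : ℝ) (htk1 : 1 ≤ tk) (htrec : tk ^ 2 - tk ≤ tkm ^ 2)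
    (xk yk xk1 : EuclideanSpace ℝ (Fin n)) (hstep : xk1 = T yk) :
    tk ^ 2 * (F xk1 - F xstar) - tkm ^ 2 * (F xk - F xstar)
      ≤ -((1 - γ * L) / (2 * γ)) * ‖tk • xk1 - tk • yk‖ ^ 2
        - 1 / (2 * γ) * ‖tk • xk1 - (tk - 1) • xk - xstar‖ ^ 2
        + 1 / (2 * γ) * ‖tk • yk - (tk - 1) • xk - xstar‖ ^ 2 := by
  have h2γ : (0:ℝ) < 2 * γ := by linarith
  -- key per-point inequality, multiplied by 2γ
  have hkeyM : ∀ u, 2 * γ * F xk1 ≤ 2 * γ * F u + (‖yk - u‖ ^ 2 - ‖xk1 - u‖ ^ 2)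
      - (1 - γ * L) * ‖xk1 - yk‖ ^ 2 := by
    intro u
    have hs := smooth_descent f f' hf' L hL yk xk1
    have hc := convex_grad_ineq f f' hf_cvx hf' yk u
    have hmin : IsMinOn (fun w => g w + ‖w - (yk - γ • f' yk)‖ ^ 2 / (2 * γ)) Set.univ xk1 := by
      rw [hstep]; exact hT yk
    have hp := prox_ineq g hg_cvx γ hγ (yk - γ • f' yk) xk1 hmin u
    -- expand the prox inner product
    have hexp : ⟪xk1 - (yk - γ • f' yk), u - xk1⟫
        = ⟪xk1 - yk, u - xk1⟫ + γ * ⟪f' yk, u - xk1⟫ := by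
      have : xk1 - (yk - γ • f' yk) = (xk1 - yk) + γ • f' yk := by abel
      rw [this, inner_add_left, real_inner_smul_left]
    rw [hexp] at hp
    -- multiply hp by γ
    have hpγ : γ * (g xk1 - g u) ≤ ⟪xk1 - yk, u - xk1⟫ + γ * ⟪f' yk, u - xk1⟫ := by
      have h1 : g xk1 - g u ≤ (⟪xk1 - yk, u - xk1⟫ + γ * ⟪f' yk, u - xk1⟫) / γ := by
        linarith
      have h2 := (le_div_iff₀ hγ).1 h1
      linarith [h2]
    have hpol := polar_id xk1 yk u
    have hzero : ⟪f' yk, xk1 - yk⟫ - ⟪f' yk, u - yk⟫ + ⟪f' yk, u - xk1⟫ = 0 := by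
      rw [← inner_sub_right, ← inner_add_right]
      have : xk1 - yk - (u - yk) + (u - xk1) = 0 := by abel
      rw [this, inner_zero_right]
    have hA := mul_le_mul_of_nonneg_left hs h2γ.le
    have hB := mul_le_mul_of_nonneg_left hc h2γ.le
    have hC := mul_le_mul_of_nonneg_left hpγ (by norm_num : (0:ℝ) ≤ 2)
    have hz2 : 2 * γ * ⟪f' yk, xk1 - yk⟫ - 2 * γ * ⟪f' yk, u - yk⟫
        + 2 * γ * ⟪f' yk, u - xk1⟫ = 0 := by linear_combination 2 * γ * hzero
    rw [hF xk1, hF u]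
    nlinarith [hA, hB, hC, hz2, hpol]
  -- specialize
  have K1 := hkeyM xk
  have K2 := hkeyM xstar
  have hB : 0 ≤ F xk - F xstar := by
    have := hxstar (Set.mem_univ xk); simpa using this
  have hid := key_id (E := EuclideanSpace ℝ (Fin n)) tk yk xk1 xk xstar
  have ht0 : (0:ℝ) ≤ tk := by linarith
  have t1 : (0:ℝ) ≤ tk * (tk - 1) := by nlinarith
  have M1' := mul_le_mul_of_nonneg_left K1 t1
  have M2' := mul_le_mul_of_nonneg_left K2 ht0
  have M3 : 2 * γ * (tk ^ 2 - tk) * (F xk - F xstar)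
      ≤ 2 * γ * tkm ^ 2 * (F xk - F xstar) := by
    apply mul_le_mul_of_nonneg_right _ hB
    have := mul_le_mul_of_nonneg_left htrec h2γ.le
    linarith
  have hbig : 2 * γ * (tk ^ 2 * (F xk1 - F xstar) - tkm ^ 2 * (F xk - F xstar))
      ≤ -(1 - γ * L) * (tk ^ 2 * ‖xk1 - yk‖ ^ 2)
        - ‖tk • xk1 - (tk - 1) • xk - xstar‖ ^ 2
        + ‖tk • yk - (tk - 1) • xk - xstar‖ ^ 2 := by
    nlinarith [M1', M2', M3, hid]
  have hns : ‖tk • xk1 - tk • yk‖ ^ 2 = tk ^ 2 * ‖xk1 - yk‖ ^ 2 := by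
    rw [← smul_sub, norm_smul]
    simp [abs_of_nonneg ht0]
    ring
  rw [← sub_nonneg]
  have heq : -((1 - γ * L) / (2 * γ)) * ‖tk • xk1 - tk • yk‖ ^ 2
        - 1 / (2 * γ) * ‖tk • xk1 - (tk - 1) • xk - xstar‖ ^ 2
        + 1 / (2 * γ) * ‖tk • yk - (tk - 1) • xk - xstar‖ ^ 2
        - (tk ^ 2 * (F xk1 - F xstar) - tkm ^ 2 * (F xk - F xstar))
      = (1 / (2 * γ)) * ((-(1 - γ * L) * (tk ^ 2 * ‖xk1 - yk‖ ^ 2)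
        - ‖tk • xk1 - (tk - 1) • xk - xstar‖ ^ 2
        + ‖tk • yk - (tk - 1) • xk - xstar‖ ^ 2)
        - 2 * γ * (tk ^ 2 * (F xk1 - F xstar) - tkm ^ 2 * (F xk - F xstar))) := by
    rw [hns]; field_simp
  rw [heq]
  apply mul_nonneg (by positivity)
  linarith [hbig]
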